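/- arXiv:2303.04786 — 2 statements merged into one kernel-verified Lean document; each statement's English description precedes it below -/
import Mathlib

section
/- Let d_0, d_1, ..., d_n be positive integers with gcd(d_0,...,d_n) = 1, and for each natural number d let a(d) denote the number of tuples (a_0,...,a_n) of natural numbers with a_0 d_0 + a_1 d_1 + ... + a_n d_n = d. Then a(d)/d^n tends to 1/(n! · d_0 d_1 ⋯ d_n) as d → ∞. -/
/-!
Let `A(N)` count the solutions of `∑ aᵢ dᵢ ≤ N`. Division with remainder, `tᵢ = aᵢ dᵢ + rᵢ` with
`rᵢ < dᵢ`, squeezes `(∏ dᵢ) A(N)` between the numbers of lattice points of the standard simplices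
of sizes `N` and `N + ∑ (dᵢ - 1)`, which are binomial coefficients; hence
`N^(n+1) ≤ (n+1)! (∏ dᵢ) A(N) ≤ (N + C)^(n+1)` for a constant `C`.

Since the `dᵢ` are coprime, every `t` beyond some `F` is representable, so `a(m) ≤ a(m + t)` for
`t ≥ F`. Thus `a(N)` is at most the average of `a` over a window of length `h` starting at `N + F`
and at least its average over a window ending at `N - F`. Such an average is a difference quotient
`(A(x + h) - A(x)) / h`, and with `h = √N` both the error `C` and the shift `F` become negligible
against `h`, while `x^(n+1) - y^(n+1) ≈ (n+1) (x - y) N^n` for `x, y ≈ N`.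
-/

open Finset Filter Topology

variable {ι : Type*} [Fintype ι]

def sumLeEquivOptionSumEq (M : ℕ) :
    {t : ι → ℕ // ∑ i, t i ≤ M} ≃ {t : Option ι → ℕ // ∑ i, t i = M} where
  toFun t := ⟨fun o => o.elim (M - ∑ i, t.1 i) t.1, by
    rw [Fintype.sum_option]; exact Nat.sub_add_cancel t.2⟩
  invFun t := ⟨fun i => t.1 (some i), by
    have := t.2; rw [Fintype.sum_option] at this; exact le_of_add_le_right this.le⟩
  left_inv t := rfl
  right_inv t := by
    have := t.2; rw [Fintype.sum_option] at this
    ext (_ | i)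
    · simp only [Option.elim]; omega
    · rfl

theorem factorial_mul_card_sum_le_eq_descFactorial (M : ℕ) :
    (Fintype.card ι).factorial * Nat.card {t : ι → ℕ // ∑ i, t i ≤ M} =
      (M + Fintype.card ι).descFactorial (Fintype.card ι) := by
  classical
  rw [Nat.card_congr ((sumLeEquivOptionSumEq M).trans (Sym.equivNatSumOfFintype _ M).symm),
    Sym.natCard_sym_eq_choose, Nat.card_eq_fintype_card, Fintype.card_option,
    Nat.descFactorial_eq_factorial_mul_choose, Nat.add_right_comm, Nat.add_sub_cancel,
    ← Nat.choose_symm_add, add_comm M]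

instance finite_sum_le (M : ℕ) : Finite {t : ι → ℕ // ∑ i, t i ≤ M} := by
  classical
  exact .of_equiv _ ((sumLeEquivOptionSumEq M).trans (Sym.equivNatSumOfFintype _ M).symm).symm

noncomputable def weightedCount (d : ι → ℕ) (m : ℕ) : ℕ :=
  Nat.card {a : ι → ℕ // ∑ i, a i * d i = m}

noncomputable def weightedCountLE (d : ι → ℕ) (N : ℕ) : ℕ :=
  Nat.card {a : ι → ℕ // ∑ i, a i * d i ≤ N}

variable {d : ι → ℕ}

theorem finite_sum_mul_le (hd : ∀ i, 0 < d i) (N : ℕ) :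
    Finite {a : ι → ℕ // ∑ i, a i * d i ≤ N} :=
  .of_injective (β := {t : ι → ℕ // ∑ i, t i ≤ N})
    (fun a => ⟨a.1, (sum_le_sum fun i _ => Nat.le_mul_of_pos_right _ (hd i)).trans a.2⟩)
    fun _ _ h => Subtype.ext (Subtype.mk.inj h)

theorem finite_sum_mul_eq (hd : ∀ i, 0 < d i) (m : ℕ) :
    Finite {a : ι → ℕ // ∑ i, a i * d i = m} :=
  have := finite_sum_mul_le hd m
  .of_injective (β := {a : ι → ℕ // ∑ i, a i * d i ≤ m}) (fun a => ⟨a.1, a.2.le⟩)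
    fun _ _ h => Subtype.ext (Subtype.mk.inj h)

def divModPi (d : ι → ℕ) [∀ i, NeZero (d i)] : (ι → ℕ) ≃ (ι → ℕ) × (∀ i, Fin (d i)) :=
  (Equiv.piCongrRight fun i => Nat.divModEquiv (d i)).trans (Equiv.arrowProdEquivProdArrow _ _ _)

theorem card_prod_pi_fin_eq_prod_mul_weightedCountLE (N : ℕ) :
    Nat.card ({a : ι → ℕ // ∑ i, a i * d i ≤ N} × ∀ i, Fin (d i)) =
      (∏ i, d i) * weightedCountLE d N := by
  rw [Nat.card_prod, Nat.card_pi, mul_comm, weightedCountLE]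
  simp only [Nat.card_eq_fintype_card, Fintype.card_fin]

theorem card_sum_le_le_prod_mul_weightedCountLE (hd : ∀ i, 0 < d i) (N : ℕ) :
    Nat.card {t : ι → ℕ // ∑ i, t i ≤ N} ≤ (∏ i, d i) * weightedCountLE d N := by
  have : ∀ i, NeZero (d i) := fun i => ⟨(hd i).ne'⟩
  have := finite_sum_mul_le hd N
  rw [← card_prod_pi_fin_eq_prod_mul_weightedCountLE]
  refine Nat.card_le_card_of_injective
    (fun t => (⟨(divModPi d t).1, (sum_le_sum fun i _ => Nat.div_mul_le_self _ _).trans t.2⟩,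
      (divModPi d t).2)) fun t t' h => Subtype.ext ((divModPi d).injective ?_)
  exact Prod.ext (Subtype.mk.inj (congrArg Prod.fst h)) (congrArg Prod.snd h :)

theorem prod_mul_weightedCountLE_le_card_sum_le (hd : ∀ i, 0 < d i) (N : ℕ) :
    (∏ i, d i) * weightedCountLE d N ≤
      Nat.card {t : ι → ℕ // ∑ i, t i ≤ N + ∑ i, (d i - 1)} := by
  have : ∀ i, NeZero (d i) := fun i => ⟨(hd i).ne'⟩
  rw [← card_prod_pi_fin_eq_prod_mul_weightedCountLE]
  refine Nat.card_le_card_of_injective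
    (fun p => ⟨(divModPi d).symm (p.1.1, p.2), ?_⟩) fun p p' h => ?_
  · have : ∀ i, (divModPi d).symm (p.1.1, p.2) i = p.1.1 i * d i + p.2 i := fun i => rfl
    simp only [this, sum_add_distrib]
    exact add_le_add p.1.2 (sum_le_sum fun i _ => Nat.le_sub_one_of_lt (p.2 i).2)
  · have := (divModPi d).symm.injective (Subtype.mk.inj h)
    exact Prod.ext (Subtype.ext (congrArg Prod.fst this)) (congrArg Prod.snd this :)

theorem weightedCountLE_eq_sum_range (hd : ∀ i, 0 < d i) (N : ℕ) :
    weightedCountLE d N = ∑ m ∈ range (N + 1), weightedCount d m := by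
  have := finite_sum_mul_eq hd
  rw [weightedCountLE, ← Nat.card_congr (Equiv.sigmaSubtypeFiberEquivSubtype
    (fun a : ι → ℕ => ∑ i, a i * d i) (q := (· ∈ range (N + 1)))
    fun _ => mem_range_succ_iff.symm), Nat.card_sigma]
  exact sum_coe_sort (range (N + 1)) (weightedCount d)

theorem weightedCountLE_add (hd : ∀ i, 0 < d i) (A h : ℕ) :
    weightedCountLE d (A + h) =
      weightedCountLE d A + ∑ j ∈ range h, weightedCount d (A + 1 + j) := by
  rw [weightedCountLE_eq_sum_range hd, weightedCountLE_eq_sum_range hd, add_right_comm,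
    sum_range_add]

theorem weightedCount_le_weightedCount_add (hd : ∀ i, 0 < d i) {t : ℕ}
    (ht : ∃ c : ι → ℕ, ∑ i, c i * d i = t) (m : ℕ) :
    weightedCount d m ≤ weightedCount d (m + t) := by
  obtain ⟨c, rfl⟩ := ht
  have := finite_sum_mul_eq hd (m + ∑ i, c i * d i)
  refine Nat.card_le_card_of_injective (fun a => ⟨a.1 + c, ?_⟩) fun a b h => ?_
  · simp only [Pi.add_apply, add_mul, sum_add_distrib, a.2]
  · exact Subtype.ext (add_right_cancel (Subtype.mk.inj h))

theorem exists_forall_ge_sum_mul_eq (hgcd : univ.gcd d = 1) :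
    ∃ F, ∀ t ≥ F, ∃ c : ι → ℕ, ∑ i, c i * d i = t := by
  obtain ⟨F, hF⟩ := Nat.exists_mem_closure_of_ge (Set.range d)
  have hdvd : Nat.setGcd (Set.range d) ∣ 1 := hgcd ▸ Finset.dvd_gcd fun i _ =>
    Nat.setGcd_dvd_of_mem (Set.mem_range_self i)
  refine ⟨F, fun t ht => ?_⟩
  obtain ⟨c, hc⟩ := AddSubmonoid.mem_closure_range_iff_of_fintype.mp
    (hF t ht (hdvd.trans (one_dvd t)))
  exact ⟨c, by simpa only [smul_eq_mul] using hc.symm⟩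

theorem pow_card_le_factorial_mul_prod_mul_weightedCountLE (hd : ∀ i, 0 < d i) (N : ℕ) :
    N ^ Fintype.card ι ≤ (Fintype.card ι).factorial * (∏ i, d i) * weightedCountLE d N :=
  calc N ^ Fintype.card ι ≤ (N + Fintype.card ι + 1 - Fintype.card ι) ^ Fintype.card ι :=
        Nat.pow_le_pow_left (by omega) _
    _ ≤ (N + Fintype.card ι).descFactorial (Fintype.card ι) := Nat.pow_sub_le_descFactorial _ _
    _ = (Fintype.card ι).factorial * Nat.card {t : ι → ℕ // ∑ i, t i ≤ N} :=
        (factorial_mul_card_sum_le_eq_descFactorial N).symm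
    _ ≤ (Fintype.card ι).factorial * (∏ i, d i) * weightedCountLE d N := by
        rw [mul_assoc]
        exact Nat.mul_le_mul_left _ (card_sum_le_le_prod_mul_weightedCountLE hd N)

theorem factorial_mul_prod_mul_weightedCountLE_le (hd : ∀ i, 0 < d i) (N : ℕ) :
    (Fintype.card ι).factorial * (∏ i, d i) * weightedCountLE d N ≤
      (N + ∑ i, (d i - 1) + Fintype.card ι) ^ Fintype.card ι :=
  calc (Fintype.card ι).factorial * (∏ i, d i) * weightedCountLE d N
      ≤ (Fintype.card ι).factorial * Nat.card {t : ι → ℕ // ∑ i, t i ≤ N + ∑ i, (d i - 1)} := by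
        rw [mul_assoc]
        exact Nat.mul_le_mul_left _ (prod_mul_weightedCountLE_le_card_sum_le hd N)
    _ = (N + ∑ i, (d i - 1) + Fintype.card ι).descFactorial (Fintype.card ι) :=
        factorial_mul_card_sum_le_eq_descFactorial _
    _ ≤ _ := Nat.descFactorial_le_pow _ _

theorem mul_weightedCount_add_weightedCountLE_le (hd : ∀ i, 0 < d i) {F : ℕ}
    (hF : ∀ t ≥ F, ∃ c : ι → ℕ, ∑ i, c i * d i = t) (N h : ℕ) :
    h * weightedCount d N + weightedCountLE d (N + F) ≤ weightedCountLE d (N + F + h) := by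
  rw [weightedCountLE_add hd (N + F) h, add_comm (h * _)]
  gcongr
  calc h * weightedCount d N = ∑ _j ∈ range h, weightedCount d N := by simp
    _ ≤ ∑ j ∈ range h, weightedCount d (N + F + 1 + j) := sum_le_sum fun j _ => by
        simpa only [add_assoc] using
          weightedCount_le_weightedCount_add hd (hF (F + (1 + j)) (by omega)) N

theorem weightedCountLE_le_add_mul_weightedCount (hd : ∀ i, 0 < d i) {F : ℕ}
    (hF : ∀ t ≥ F, ∃ c : ι → ℕ, ∑ i, c i * d i = t) (M h : ℕ) :
    weightedCountLE d (M + h) ≤ weightedCountLE d M + h * weightedCount d (M + h + F) := by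
  rw [weightedCountLE_add hd]
  gcongr
  calc ∑ j ∈ range h, weightedCount d (M + 1 + j) ≤ ∑ _j ∈ range h, weightedCount d (M + h + F) :=
        sum_le_sum fun j hj => by
          have hj := mem_range.mp hj
          simpa [show M + 1 + j + (h - 1 - j + F) = M + h + F by omega] using
            weightedCount_le_weightedCount_add hd (hF (h - 1 - j + F) (by omega)) (M + 1 + j)
    _ = h * weightedCount d (M + h + F) := by simp

theorem pow_succ_sub_pow_succ_eq (x y : ℝ) {w : ℝ} (hw : w ≠ 0) (k : ℕ) :
    x ^ (k + 1) - y ^ (k + 1) =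
      (x - y) * w ^ k * ∑ i ∈ range (k + 1), (x / w) ^ i * (y / w) ^ (k - i) := by
  have h := geom_sum₂_mul (x / w) (y / w) (k + 1)
  rw [Nat.add_sub_cancel] at h
  calc x ^ (k + 1) - y ^ (k + 1) = w ^ (k + 1) * ((x / w) ^ (k + 1) - (y / w) ^ (k + 1)) := by
        rw [div_pow, div_pow]; field_simp
    _ = (x - y) * w ^ k * ∑ i ∈ range (k + 1), (x / w) ^ i * (y / w) ^ (k - i) := by
        rw [← h]; field_simp; ring

theorem tendsto_sum_pow_mul_pow {α : Type*} {l : Filter α} {x y : α → ℝ}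
    (hx : Tendsto x l (𝓝 1)) (hy : Tendsto y l (𝓝 1)) (k : ℕ) :
    Tendsto (fun a => ∑ i ∈ range (k + 1), x a ^ i * y a ^ (k - i)) l (𝓝 (k + 1)) := by
  simpa using tendsto_finsetSum (range (k + 1)) fun i _ => (hx.pow i).mul (hy.pow (k - i))

theorem tendsto_natSqrt_atTop : Tendsto (fun N : ℕ => (Nat.sqrt N : ℝ)) atTop atTop :=
  tendsto_natCast_atTop_atTop.comp <|
    tendsto_atTop_atTop.mpr fun b => ⟨b * b, fun _ h => Nat.le_sqrt.mpr h⟩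

theorem tendsto_natSqrt_div_self : Tendsto (fun N : ℕ => (Nat.sqrt N : ℝ) / N) atTop (𝓝 0) := by
  refine squeeze_zero' (Eventually.of_forall fun N => by positivity) ?_
    (tendsto_inv_atTop_zero.comp tendsto_natSqrt_atTop)
  filter_upwards [eventually_ge_atTop 1] with N hN
  have hs : (0 : ℝ) < Nat.sqrt N := by exact_mod_cast Nat.sqrt_pos.mpr hN
  rw [Function.comp_apply, div_le_iff₀ (by positivity), inv_mul_eq_div, le_div_iff₀ hs]
  exact_mod_cast Nat.sqrt_le N

theorem tendsto_natSqrt_add_div (a : ℝ) :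
    Tendsto (fun N : ℕ => (Nat.sqrt N + a) / Nat.sqrt N) atTop (𝓝 1) := by
  have := (tendsto_inv_atTop_zero.comp tendsto_natSqrt_atTop).const_mul a |>.const_add 1
  rw [mul_zero, add_zero] at this
  refine this.congr' ?_
  filter_upwards [eventually_ge_atTop 1] with N hN
  have hs : (Nat.sqrt N : ℝ) ≠ 0 := by exact_mod_cast (Nat.sqrt_pos.mpr hN).ne'
  simp only [Function.comp_apply]
  field_simp

theorem tendsto_add_add_mul_natSqrt_div (a b : ℝ) :
    Tendsto (fun N : ℕ => (N + a + b * Nat.sqrt N) / N) atTop (𝓝 1) := by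
  have := ((tendsto_inv_atTop_zero.comp tendsto_natCast_atTop_atTop).const_mul a).add
    (tendsto_natSqrt_div_self.const_mul b) |>.const_add 1
  rw [mul_zero, mul_zero, add_zero, add_zero] at this
  refine this.congr' ?_
  filter_upwards [eventually_ge_atTop 1] with N hN
  have hN : (N : ℝ) ≠ 0 := by exact_mod_cast (Nat.one_le_iff_ne_zero.mp hN)
  simp only [Function.comp_apply]
  field_simp
  ring

section Window

variable {u G : ℕ → ℝ} {k C F : ℕ}

theorem div_pow_le_of_window (hG_ge : ∀ N : ℕ, (N : ℝ) ^ (k + 1) ≤ G N)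
    (hG_le : ∀ N : ℕ, G N ≤ ((N : ℝ) + C) ^ (k + 1))
    (hup : ∀ N h : ℕ, h * u N ≤ G (N + F + h) - G (N + F)) {N h : ℕ} (hN : 0 < N) (hh : 0 < h) :
    u N / N ^ k ≤ (h + C) / h *
      ∑ i ∈ range (k + 1), ((N + F + h + C) / N : ℝ) ^ i * ((N + F) / N : ℝ) ^ (k - i) := by
  have hN' : (0 : ℝ) < N := by exact_mod_cast hN
  have hh' : (0 : ℝ) < h := by exact_mod_cast hh
  have key := calc
    h * u N ≤ G (N + F + h) - G (N + F) := hup N h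
    _ ≤ ((N + F + h : ℕ) + C : ℝ) ^ (k + 1) - ((N + F : ℕ) : ℝ) ^ (k + 1) :=
      sub_le_sub (hG_le _) (hG_ge _)
    _ = (h + C) * N ^ k *
        ∑ i ∈ range (k + 1), ((N + F + h + C) / N : ℝ) ^ i * ((N + F) / N : ℝ) ^ (k - i) := by
      push_cast
      rw [pow_succ_sub_pow_succ_eq _ _ hN'.ne']
      ring
  rw [div_le_iff₀ (by positivity), div_mul_eq_mul_div, div_mul_eq_mul_div, le_div_iff₀ hh']
  linarith

theorem le_div_pow_of_window (hG_ge : ∀ N : ℕ, (N : ℝ) ^ (k + 1) ≤ G N)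
    (hG_le : ∀ N : ℕ, G N ≤ ((N : ℝ) + C) ^ (k + 1))
    (hlow : ∀ M h : ℕ, G (M + h) - G M ≤ h * u (M + h + F)) {M h N : ℕ} (hMN : M + h + F = N)
    (hN : 0 < N) (hh : 0 < h) :
    (h - C) / h * ∑ i ∈ range (k + 1), ((M + h) / N : ℝ) ^ i * ((M + C) / N : ℝ) ^ (k - i) ≤
      u N / N ^ k := by
  have hN' : (0 : ℝ) < N := by exact_mod_cast hN
  have hh' : (0 : ℝ) < h := by exact_mod_cast hh
  have key := calc
    (h - C) * N ^ k * ∑ i ∈ range (k + 1), ((M + h) / N : ℝ) ^ i * ((M + C) / N : ℝ) ^ (k - i)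
      = ((M + h : ℕ) : ℝ) ^ (k + 1) - ((M : ℝ) + C) ^ (k + 1) := by
      push_cast
      rw [pow_succ_sub_pow_succ_eq _ _ hN'.ne']
      ring
    _ ≤ G (M + h) - G M := sub_le_sub (hG_ge _) (hG_le _)
    _ ≤ h * u N := hMN ▸ hlow M h
  rw [le_div_iff₀ (by positivity), div_mul_eq_mul_div, div_mul_eq_mul_div, div_le_iff₀ hh']
  linarith

theorem tendsto_div_pow_of_window (hG_ge : ∀ N : ℕ, (N : ℝ) ^ (k + 1) ≤ G N)
    (hG_le : ∀ N : ℕ, G N ≤ ((N : ℝ) + C) ^ (k + 1))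
    (hup : ∀ N h : ℕ, h * u N ≤ G (N + F + h) - G (N + F))
    (hlow : ∀ M h : ℕ, G (M + h) - G M ≤ h * u (M + h + F)) :
    Tendsto (fun N : ℕ => u N / N ^ k) atTop (𝓝 (k + 1)) := by
  have hupper : Tendsto (fun N : ℕ => (Nat.sqrt N + C) / Nat.sqrt N * ∑ i ∈ range (k + 1),
      ((N + F + Nat.sqrt N + C) / N : ℝ) ^ i * ((N + F) / N : ℝ) ^ (k - i)) atTop (𝓝 (k + 1)) := by
    simpa only [one_mul] using (tendsto_natSqrt_add_div C).mul (tendsto_sum_pow_mul_pow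
      ((tendsto_add_add_mul_natSqrt_div (F + C) 1).congr fun N => by ring_nf)
      ((tendsto_add_add_mul_natSqrt_div F 0).congr fun N => by ring_nf) k)
  have hlower : Tendsto (fun N : ℕ => (Nat.sqrt N - C) / Nat.sqrt N * ∑ i ∈ range (k + 1),
      ((N - F) / N : ℝ) ^ i * ((N - F - Nat.sqrt N + C) / N : ℝ) ^ (k - i)) atTop (𝓝 (k + 1)) := by
    simpa only [← sub_eq_add_neg, one_mul] using (tendsto_natSqrt_add_div (-C)).mul
      (tendsto_sum_pow_mul_pow
        ((tendsto_add_add_mul_natSqrt_div (-F) 0).congr fun N => by ring_nf)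
        ((tendsto_add_add_mul_natSqrt_div (C - F) (-1)).congr fun N => by ring_nf) k)
  refine tendsto_of_tendsto_of_tendsto_of_le_of_le' hlower hupper ?_ ?_
  · filter_upwards [eventually_ge_atTop ((F + 1) ^ 2)] with N hN
    have hs : F + 1 ≤ Nat.sqrt N := Nat.le_sqrt'.mpr hN
    have hsN := Nat.sqrt_le' N
    have hle : Nat.sqrt N + F ≤ N := by nlinarith
    have hMN : N - Nat.sqrt N - F + Nat.sqrt N + F = N := by omega
    have := le_div_pow_of_window hG_ge hG_le hlow hMN (by omega) (by omega)
    rw [Nat.cast_sub (by omega), Nat.cast_sub (by omega)] at this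
    rwa [show (N - Nat.sqrt N - F + Nat.sqrt N : ℝ) = N - F by ring,
      show (N - Nat.sqrt N - F + C : ℝ) = N - F - Nat.sqrt N + C by ring] at this
  · filter_upwards [eventually_ge_atTop 1] with N hN
    exact div_pow_le_of_window hG_ge hG_le hup hN (Nat.sqrt_pos.mpr hN)

end Window

/-- The number of `(n+1)`-tuples of naturals `a` with `∑ i, a i * d i = N`,
divided by `N ^ n`, tends to `1 / (n! * d₀ ⋯ dₙ)` as `N → ∞`, provided the
`d i` are positive with gcd `1`. -/
theorem stmt0 (n : ℕ) (d : Fin (n + 1) → ℕ) (hd : ∀ i, 0 < d i)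
    (hgcd : Finset.univ.gcd d = 1) :
    Filter.Tendsto
      (fun N : ℕ =>
        (Nat.card {a : Fin (n + 1) → ℕ // ∑ i, a i * d i = N} : ℝ) / (N : ℝ) ^ n)
      Filter.atTop
      (nhds (1 / ((n.factorial : ℝ) * ∏ i, (d i : ℝ)))) := by
  obtain ⟨F, hF⟩ := exists_forall_ge_sum_mul_eq hgcd
  obtain ⟨K, hK⟩ : ∃ K, K = (n + 1).factorial * ∏ i, d i := ⟨_, rfl⟩
  have hG_ge := pow_card_le_factorial_mul_prod_mul_weightedCountLE hd
  have hG_le := factorial_mul_prod_mul_weightedCountLE_le hd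
  simp only [Fintype.card_fin, ← hK, add_assoc] at hG_ge hG_le
  have hlim := tendsto_div_pow_of_window (u := fun N => K * weightedCount d N)
    (G := fun N => K * weightedCountLE d N) (k := n) (C := ∑ i, (d i - 1) + (n + 1)) (F := F)
    (fun N => by exact_mod_cast hG_ge N) (fun N => by exact_mod_cast hG_le N)
    (fun N h => by
      have : (h : ℝ) * weightedCount d N + weightedCountLE d (N + F) ≤
          weightedCountLE d (N + F + h) := by
        exact_mod_cast mul_weightedCount_add_weightedCountLE_le hd hF N h
      nlinarith [Nat.cast_nonneg (α := ℝ) K])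
    (fun M h => by
      have : (weightedCountLE d (M + h) : ℝ) ≤
          weightedCountLE d M + h * weightedCount d (M + h + F) := by
        exact_mod_cast weightedCountLE_le_add_mul_weightedCount hd hF M h
      nlinarith [Nat.cast_nonneg (α := ℝ) K])
  have hK0 : (K : ℝ) ≠ 0 := by
    rw [hK]; exact_mod_cast (Nat.mul_pos (Nat.factorial_pos _) (prod_pos fun i _ => hd i)).ne'
  convert hlim.div_const K using 1
  · ext N
    simp only [weightedCount]
    field_simp
  · rw [hK]
    push_cast [Nat.factorial_succ]
    field_simp
end

section
/- Let q be a prime power and m, n ≥ 0 natural numbers. If v_1,...,v_{m+n} are independent uniformly distributed random vectors in 𝔽_q^m, then the probability that v_1,...,v_{m+n} do not span 𝔽_q^m is at most q^{-n}/(q − 1). -/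
/-!
A family that does not span lies in a hyperplane, so it is annihilated by a nonzero functional
and by its `q - 1` nonzero multiples. A fixed nonzero functional annihilates `k` independent
uniform vectors with probability `q ^ (-k)`, since its kernel has index `q`. Double counting
pairs (family, nonzero annihilating functional) therefore gives
`P(no span) * (q - 1) ≤ (q ^ m - 1) * q ^ (-(m + n)) ≤ q ^ (-n)`.
-/

section

open Module Finset

variable {F V ι : Type*} [Field F] [AddCommGroup V] [Module F V]

theorem exists_dual_ne_zero_forall_eq_zero {v : ι → V}
    (hv : Submodule.span F (Set.range v) ≠ ⊤) : ∃ f : Dual F V, f ≠ 0 ∧ ∀ i, f (v i) = 0 := by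
  obtain ⟨f, hf, hle⟩ := Submodule.exists_le_ker_of_lt_top _ hv.lt_top
  exact ⟨f, hf, fun i => hle (Submodule.subset_span ⟨i, rfl⟩)⟩

theorem Module.Dual.card_ker_mul_card {f : Dual F V} (hf : f ≠ 0) :
    Nat.card (LinearMap.ker f) * Nat.card F = Nat.card V := by
  rw [Submodule.card_eq_card_quotient_mul_card (LinearMap.ker f),
    Nat.card_congr (f.quotKerEquivOfSurjective (f.surjective hf)).toEquiv]

theorem Module.Dual.card_forall_eq_zero [Finite ι] (f : Dual F V) :
    Nat.card {v : ι → V // ∀ i, f (v i) = 0} = Nat.card (LinearMap.ker f) ^ Nat.card ι := by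
  rw [Nat.card_congr (Equiv.subtypePiEquivPi (p := fun _ x => f x = 0)), Nat.card_fun]
  rfl

theorem Module.Dual.natCard_eq [Finite V] : Nat.card (Dual F V) = Nat.card V := by
  rw [Module.natCard_eq_pow_finrank (K := F), Module.natCard_eq_pow_finrank (K := F) (V := V),
    Subspace.dual_finrank_eq]

theorem card_sub_one_le_card_annihilators [Finite F] [Finite V] {v : ι → V}
    (hv : Submodule.span F (Set.range v) ≠ ⊤) :
    Nat.card F - 1 ≤ Nat.card {f : Dual F V // f ≠ 0 ∧ ∀ i, f (v i) = 0} := by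
  obtain ⟨f, hf, hfv⟩ := exists_dual_ne_zero_forall_eq_zero hv
  have : Finite (Dual F V) := DFunLike.finite _
  rw [← Nat.card_units]
  refine Nat.card_le_card_of_injective
    (fun u : Fˣ => ⟨(u : F) • f, smul_ne_zero u.ne_zero hf, fun i => by simp [hfv i]⟩) ?_
  intro u u' h
  exact Units.ext (smul_left_injective F hf (congrArg Subtype.val h))

theorem card_not_spanning_mul_le [Finite F] [Finite V] [Finite ι] :
    Nat.card {v : ι → V // Submodule.span F (Set.range v) ≠ ⊤} * (Nat.card F - 1) *
        Nat.card F ^ Nat.card ι ≤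
      (Nat.card V - 1) * Nat.card V ^ Nat.card ι := by
  classical
  have : Fintype ι := Fintype.ofFinite ι
  have : Fintype V := Fintype.ofFinite V
  have : Fintype (Dual F V) := @Fintype.ofFinite _ (DFunLike.finite _)
  set q := Nat.card F
  set k := Nat.card ι
  let B := univ.filter fun v : ι → V => Submodule.span F (Set.range v) ≠ ⊤
  let t := univ.filter fun f : Dual F V => f ≠ 0
  let r : (ι → V) → Dual F V → Prop := fun v f => ∀ i, f (v i) = 0
  have above : ∀ v ∈ B, q - 1 ≤ (t.bipartiteAbove r v).card := by
    intro v hv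
    rw [bipartiteAbove, filter_filter, ← Fintype.card_subtype, ← Nat.card_eq_fintype_card]
    exact card_sub_one_le_card_annihilators (mem_filter.1 hv).2
  have below : ∀ f ∈ t, (B.bipartiteBelow r f).card ≤ (Nat.card V / q) ^ k := by
    intro f hf
    rw [← Nat.eq_div_of_mul_eq_left Nat.card_pos.ne' (Dual.card_ker_mul_card (mem_filter.1 hf).2),
      ← Dual.card_forall_eq_zero, Nat.card_eq_fintype_card, Fintype.card_subtype]
    exact card_le_card (filter_subset_filter _ (subset_univ B))
  have hB : Nat.card {v : ι → V // Submodule.span F (Set.range v) ≠ ⊤} = B.card := by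
    rw [Nat.card_eq_fintype_card, Fintype.card_subtype]
  have ht : t.card = Nat.card V - 1 := by
    rw [show t = univ.erase 0 from filter_ne' _ _, card_erase_of_mem (mem_univ _), card_univ,
      ← Nat.card_eq_fintype_card, Dual.natCard_eq]
  rw [hB]
  calc B.card * (q - 1) * q ^ k ≤ t.card * (Nat.card V / q) ^ k * q ^ k :=
        Nat.mul_le_mul_right _ (card_mul_le_card_mul r above below)
    _ = (Nat.card V - 1) * (Nat.card V / q * q) ^ k := by rw [ht, mul_assoc, mul_pow]
    _ ≤ (Nat.card V - 1) * Nat.card V ^ k := by gcongr; exact Nat.div_mul_le_self _ _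

end

/-- If `v₁, …, v_{m+n}` are uniformly random vectors in `𝔽_q^m`, the probability
that they fail to span `𝔽_q^m` is at most `q^(-n) / (q - 1)`. -/
theorem stmt3 (F : Type*) [Field F] [Fintype F] (q : ℕ) (hq : Fintype.card F = q)
    (m n : ℕ) :
    (Nat.card {v : Fin (m + n) → (Fin m → F) //
        Submodule.span F (Set.range v) ≠ ⊤} : ℝ) /
      (Nat.card (Fin (m + n) → (Fin m → F)) : ℝ) ≤
      (q : ℝ) ^ (-(n : ℤ)) / ((q : ℝ) - 1) := by
  have hF : Nat.card F = q := Nat.card_eq_fintype_card.trans hq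
  have hV : Nat.card (Fin m → F) = q ^ m := by rw [Nat.card_fun, hF, Nat.card_fin]
  have hq1 : 1 < q := hF ▸ Finite.one_lt_card
  have hcount := card_not_spanning_mul_le (F := F) (V := Fin m → F) (ι := Fin (m + n))
  rw [hF, hV, Nat.card_fin] at hcount
  have hcountR : (Nat.card {v : Fin (m + n) → (Fin m → F) //
      Submodule.span F (Set.range v) ≠ ⊤} : ℝ) * ((q : ℝ) - 1) * (q : ℝ) ^ (m + n) ≤
      (q : ℝ) ^ m * ((q : ℝ) ^ m) ^ (m + n) := by
    rw [← Nat.cast_pred (by omega)]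
    exact_mod_cast hcount.trans (Nat.mul_le_mul_right _ (Nat.sub_le _ 1))
  have hpow : (q : ℝ) ^ (-(n : ℤ)) = (q : ℝ) ^ m / (q : ℝ) ^ (m + n) := by
    rw [zpow_neg, zpow_natCast, pow_add]
    field_simp
  have hq1R : (1 : ℝ) < q := by exact_mod_cast hq1
  rw [Nat.card_fun, hV, Nat.card_fin, div_le_div_iff₀ (by positivity) (by linarith), hpow,
    div_mul_eq_mul_div, le_div_iff₀ (by positivity)]
  exact_mod_cast hcountR
end
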